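/- arXiv:2601.19855 — 6 statements merged into one kernel-verified Lean document; each statement's English description precedes it below -/
import Mathlib

section
/- For every θ ∈ ℝ, the 3×3 complex matrix C(θ) with rows [e^{2iθ}, −e^{2iθ}, 0], [−1, 2, −1], and [0, −e^{−2iθ}, e^{−2iθ}] has characteristic polynomial X·(X − 1)·(X − (e^{2iθ} + 1 + e^{−2iθ})); in particular, its eigenvalues counted with algebraic multiplicity are 0, 1, and e^{2iθ} + 1 + e^{−2iθ}. -/
open Complex Matrix Polynomial

/-- The generalised capacitance matrix of the parity-time-symmetric trimer with wave speeds
`(e^{iθ}, 1, e^{-iθ})` at `ω = 0`. -/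
noncomputable def Ctheta (θ : ℝ) : Matrix (Fin 3) (Fin 3) ℂ :=
  !![Complex.exp (2 * Complex.I * θ), -Complex.exp (2 * Complex.I * θ), 0;
     -1, 2, -1;
     0, -Complex.exp (-(2 * Complex.I * θ)), Complex.exp (-(2 * Complex.I * θ))]

lemma charpoly_aux (a b : ℂ) (hab : a * b = 1) :
    Matrix.charpoly !![a, -a, 0; -1, 2, -1; 0, -b, b] =
      X * (X - 1) * (X - C (a + 1 + b)) := by
  rw [Matrix.charpoly, Matrix.det_fin_three]
  have h : (C a) * (C b) = 1 := by rw [← C_mul, hab]; simp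
  simp [Matrix.charmatrix_apply, Matrix.one_apply, map_ofNat]
  linear_combination (X : ℂ[X]) * h

lemma roots_aux (c : ℂ) : (X * (X - 1) * (X - C c)).roots = {0, 1, c} := by
  have h1 : (X : ℂ[X]) - 1 = X - C 1 := by simp
  rw [Polynomial.roots_mul, Polynomial.roots_mul, Polynomial.roots_X, h1,
    Polynomial.roots_X_sub_C, Polynomial.roots_X_sub_C]
  · rfl
  · exact mul_ne_zero X_ne_zero (by rw [h1]; exact X_sub_C_ne_zero 1)
  · exact mul_ne_zero (mul_ne_zero X_ne_zero (by rw [h1]; exact X_sub_C_ne_zero 1))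
      (X_sub_C_ne_zero c)

/-- The characteristic polynomial of `C(θ)` factors as
`X (X - 1) (X - (e^{2iθ} + 1 + e^{-2iθ}))`; in particular the eigenvalues, counted with
algebraic multiplicity, are `0`, `1` and `e^{2iθ} + 1 + e^{-2iθ}`. -/
theorem stmt_4 (θ : ℝ) :
    (Ctheta θ).charpoly =
      X * (X - 1) *
        (X - C (Complex.exp (2 * Complex.I * θ) + 1 + Complex.exp (-(2 * Complex.I * θ)))) ∧
    (Ctheta θ).charpoly.roots =
      {0, 1, Complex.exp (2 * Complex.I * θ) + 1 + Complex.exp (-(2 * Complex.I * θ))} := by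
  have hcp : (Ctheta θ).charpoly =
      X * (X - 1) *
        (X - C (Complex.exp (2 * Complex.I * θ) + 1 + Complex.exp (-(2 * Complex.I * θ)))) := by
    apply charpoly_aux
    rw [← Complex.exp_add]; simp
  exact ⟨hcp, by rw [hcp, roots_aux]⟩
end

section
/- Let ω ∈ ℂ with ω ≠ 0, δ ∈ ℂ with δ ≠ 0, and s ∈ ℝ. Define the 2×2 complex matrices P₁ = P_int(ω, 1, s)·D(δ)⁻¹·P_int(ω, 1, 1)·D(δ) and P₂ = D(δ)⁻¹·P_int(ω, 1, 1)·D(δ). Then the determinant of the 2×2 matrix whose first column is P₂·P₁·(1, iω)ᵀ and whose second column is (1, iω)ᵀ equals ω·((δ² − 1)/δ²)·sin(ω)·[ −2δ·cos(ω)·cos(ωs) + (1 + δ²)·sin(ω)·sin(ωs) ]. -/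
open Complex Matrix

/-- The interior propagation matrix `P_int(ω, v, ℓ)`. -/
noncomputable def Pint (ω v : ℂ) (ℓ : ℝ) : Matrix (Fin 2) (Fin 2) ℂ :=
  !![Complex.cos (ω * ℓ / v), (v / ω) * Complex.sin (ω * ℓ / v);
     -(ω / v) * Complex.sin (ω * ℓ / v), Complex.cos (ω * ℓ / v)]

/-- The diagonal matrix `D(δ) = diag(1, δ)`. -/
noncomputable def Dmat (δ : ℂ) : Matrix (Fin 2) (Fin 2) ℂ := !![1, 0; 0, δ]

lemma Dinv (δ : ℂ) (hδ : δ ≠ 0) : (Dmat δ)⁻¹ = !![1, 0; 0, δ⁻¹] := by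
  apply Matrix.inv_eq_right_inv
  simp [Dmat, Matrix.mul_fin_two, hδ, Matrix.one_fin_two]

set_option maxHeartbeats 2000000 in
/-- The characteristic function of the symmetric dimer under the parity-time symmetric
perfect transmission radiation conditions: with
`P₁ = P_int(ω,1,s)·D(δ)⁻¹·P_int(ω,1,1)·D(δ)` and `P₂ = D(δ)⁻¹·P_int(ω,1,1)·D(δ)`,
`det( P₂P₁(1, iω)ᵀ | (1, iω)ᵀ )` has the stated explicit form. -/
theorem stmt_7 (ω δ : ℂ) (hω : ω ≠ 0) (hδ : δ ≠ 0) (s : ℝ) :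
    Matrix.det
      !![((((Dmat δ)⁻¹ * Pint ω 1 1 * Dmat δ) *
            (Pint ω 1 s * (Dmat δ)⁻¹ * Pint ω 1 1 * Dmat δ)) *ᵥ ![1, Complex.I * ω]) 0, 1;
         ((((Dmat δ)⁻¹ * Pint ω 1 1 * Dmat δ) *
            (Pint ω 1 s * (Dmat δ)⁻¹ * Pint ω 1 1 * Dmat δ)) *ᵥ ![1, Complex.I * ω]) 1,
         Complex.I * ω] =
      ω * ((δ ^ 2 - 1) / δ ^ 2) * Complex.sin ω *
        (-2 * δ * Complex.cos ω * Complex.cos (ω * s)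
          + (1 + δ ^ 2) * Complex.sin ω * Complex.sin (ω * s)) := by
  rw [Dinv δ hδ]
  simp only [Pint, Dmat, Matrix.mul_fin_two, Matrix.det_fin_two_of, Matrix.mulVec,
    Matrix.cons_val', Matrix.cons_val_zero, Matrix.cons_val_one, Matrix.head_cons,
    Matrix.head_fin_const, Matrix.empty_val', Matrix.cons_val_fin_one, dotProduct,
    Fin.sum_univ_two, Matrix.of_apply, Complex.ofReal_one, mul_one, div_one]
  simp only [div_eq_mul_inv, ← inv_pow]
  obtain ⟨A, hA, hA2⟩ : ∃ A, ω * A = 1 ∧ ω⁻¹ = A := ⟨ω⁻¹, mul_inv_cancel₀ hω, rfl⟩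
  obtain ⟨B, hB, hB2⟩ : ∃ B, δ * B = 1 ∧ δ⁻¹ = B := ⟨δ⁻¹, mul_inv_cancel₀ hδ, rfl⟩
  rw [hA2, hB2]
  have hI : Complex.I ^ 2 = -1 := Complex.I_sq
  linear_combination ((-1) * ω * B ^ 2 * Complex.sin ω ^ 2 * Complex.sin (ω * (s:ℂ)) + (-1) * Complex.I * ω * B * Complex.cos ω * Complex.sin ω * Complex.sin (ω * (s:ℂ)) + (-1) * Complex.I * ω * δ * Complex.cos ω * Complex.sin ω * Complex.sin (ω * (s:ℂ)) + 1 * Complex.I * ω * δ * B ^ 2 * Complex.cos ω * Complex.sin ω * Complex.sin (ω * (s:ℂ)) + 1 * Complex.I * ω * δ ^ 2 * B * Complex.cos ω * Complex.sin ω * Complex.sin (ω * (s:ℂ)) + 1 * Complex.I ^ 2 * ω * δ * Complex.cos ω * Complex.sin ω * Complex.cos (ω * (s:ℂ)) + 1 * Complex.I ^ 2 * ω * δ * B * Complex.cos ω ^ 2 * Complex.sin (ω * (s:ℂ)) + (-1) * Complex.I ^ 2 * ω * δ ^ 2 * Complex.sin ω ^ 2 * Complex.sin (ω * (s:ℂ))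 + 1 * Complex.I ^ 2 * ω * δ ^ 2 * B * Complex.cos ω * Complex.sin ω * Complex.cos (ω * (s:ℂ)) + (-1) * Complex.I ^ 2 * ω ^ 2 * A * δ ^ 2 * Complex.sin ω ^ 2 * Complex.sin (ω * (s:ℂ))) * hA + (1 * ω * Complex.cos ω ^ 2 * Complex.sin (ω * (s:ℂ)) + (-1) * ω * B * Complex.cos ω * Complex.sin ω * Complex.cos (ω * (s:ℂ)) + 2 * ω * δ * Complex.cos ω * Complex.sin ω * Complex.cos (ω * (s:ℂ)) + (-1) * ω * δ ^ 2 * Complex.sin ω ^ 2 * Complex.sin (ω * (s:ℂ)) + 2 * ω * δ ^ 2 * B * Complex.cos ω * Complex.sin ω * Complex.cos (ω * (s:ℂ)) + (-1) * ω * δ ^ 3 * B * Complex.sin ω ^ 2 * Complex.sin (ω * (s:ℂ)) + (-1) * Complex.I * ω * Complex.cos ω ^ 2 * Complex.cos (ω * (s:ℂ)) + 1 * Complex.I * ω * B * Complex.cos ω * Complex.sin ω * Complex.sin (ω * (s:ℂ)) + 1 * Complex.I * ω * δ * Complex.cos ω * Complex.sin ω * Complex.sin (ω * (s:ℂ)) +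 (-1) * Complex.I * ω * δ * B * Complex.cos ω ^ 2 * Complex.cos (ω * (s:ℂ)) + 1 * Complex.I ^ 2 * ω * Complex.cos ω ^ 2 * Complex.sin (ω * (s:ℂ)) + 1 * Complex.I ^ 2 * ω * δ * Complex.cos ω * Complex.sin ω * Complex.cos (ω * (s:ℂ))) * hB + (1 * ω * Complex.cos ω ^ 2 * Complex.sin (ω * (s:ℂ)) + 2 * ω * δ * Complex.cos ω * Complex.sin ω * Complex.cos (ω * (s:ℂ)) + (-1) * ω * δ ^ 2 * Complex.sin ω ^ 2 * Complex.sin (ω * (s:ℂ))) * hI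
end

section
/- Let θ > 0 be a real number. The quadratic polynomial q(λ) = (π/θ)·λ² + iπ·(1 + 1/θ)·λ − 2π in the complex variable λ has a repeated root (i.e., its discriminant (iπ(1 + 1/θ))² + 8π²/θ vanishes) if and only if −1 + 6θ − θ² = 0, which holds if and only if θ = 3 + 2√2 or θ = 3 − 2√2. -/
open Complex

/-- The quadratic `q(λ) = (π/θ)λ² + iπ(1 + 1/θ)λ − 2π` has a repeated root (vanishing
discriminant) iff `−1 + 6θ − θ² = 0` iff `θ = 3 ± 2√2`. -/
theorem stmt_9 (θ : ℝ) (hθ : 0 < θ) :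
    ((Complex.I * (Real.pi : ℂ) * (1 + 1 / (θ : ℂ))) ^ 2 + 8 * (Real.pi : ℂ) ^ 2 / (θ : ℂ) = 0
      ↔ -1 + 6 * θ - θ ^ 2 = 0) ∧
    (-1 + 6 * θ - θ ^ 2 = 0 ↔ θ = 3 + 2 * Real.sqrt 2 ∨ θ = 3 - 2 * Real.sqrt 2) := by
  have hθ0 : (θ : ℂ) ≠ 0 := by exact_mod_cast hθ.ne'
  have hπ : (Real.pi : ℂ) ≠ 0 := by exact_mod_cast Real.pi_ne_zero
  constructor
  · have key : (Complex.I * (Real.pi : ℂ) * (1 + 1 / (θ : ℂ))) ^ 2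
        + 8 * (Real.pi : ℂ) ^ 2 / (θ : ℂ)
        = (Real.pi : ℂ) ^ 2 / (θ : ℂ) ^ 2 * ((-1 + 6 * θ - θ ^ 2 : ℝ) : ℂ) := by
      push_cast
      field_simp
      ring_nf
      simp [Complex.I_sq]
      ring
    rw [key, mul_eq_zero]
    constructor
    · rintro (h | h)
      · exact absurd h (div_ne_zero (pow_ne_zero _ hπ) (pow_ne_zero _ hθ0))
      · exact_mod_cast h
    · intro h
      right
      exact_mod_cast h
  · have hs : Real.sqrt 2 ^ 2 = 2 := Real.sq_sqrt (by norm_num)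
    constructor
    · intro h
      have : (θ - (3 + 2 * Real.sqrt 2)) * (θ - (3 - 2 * Real.sqrt 2)) = 0 := by
        nlinarith [hs]
      rcases mul_eq_zero.mp this with h' | h'
      · left; linarith
      · right; linarith
    · rintro (h | h) <;> subst h <;> nlinarith [hs]
end

section
/- Let γ ∈ ℝ, ω ∈ ℂ with ω ≠ 0, δ ∈ ℂ with δ ≠ 0, s, ℓ ∈ ℝ, and ν ∈ ℂ with ν ≠ 0 and ν² = γ² − ω². For a, b ∈ ℂ set Ψ(a, b) = (a·cos(ωs) + b·sin(ωs))/ν. Define the gauge interior propagation matrix Q = e^{−γℓ}·G₋·Mₕ·G₊, where G₋ has rows [1,0],[−γ,1], G₊ has rows [1,0],[γ,1], and Mₕ has rows [cosh(νℓ), sinh(νℓ)/ν] and [ν·sinh(νℓ), cosh(νℓ)]. Then the one-block gauge propagation matrix P = P_int(ω, 1, s)·D(δ)⁻¹·Q·D(δ) equals e^{−γℓ} times the 2×2 matrix with entries: (1,1) = cos(ωs)·cosh(νℓ) − Ψ(−γ, ω/δ)·sinh(νℓ); (1,2) = (1/ω)·cosh(νℓ)·sin(ωs) − (δ/ω)·Ψ(−ω,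 γ/δ)·sinh(νℓ); (2,1) = −ω·cosh(νℓ)·sin(ωs) − (ω/δ)·Ψ(ω, δγ)·sinh(νℓ); (2,2) = cos(ωs)·cosh(νℓ) − δ·Ψ(γ/δ, ω)·sinh(νℓ); moreover det(P) = e^{−2γℓ}, and in particular the symmetrised propagation matrix e^{γℓ}·P has determinant 1. -/
open Complex Matrix

/-- `Ψ(a,b) = (a cos(ωs) + b sin(ωs))/ν`. -/
noncomputable def Psi (ω ν : ℂ) (s : ℝ) (a b : ℂ) : ℂ :=
  (a * Complex.cos (ω * s) + b * Complex.sin (ω * s)) / ν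

/-- The gauge interior propagation matrix `Q = e^{−γℓ} G₋ Mₕ G₊`. -/
noncomputable def Qgauge (γ : ℝ) (ν : ℂ) (ℓ : ℝ) : Matrix (Fin 2) (Fin 2) ℂ :=
  Complex.exp (-(γ : ℂ) * (ℓ : ℂ)) •
    (!![1, 0; -(γ : ℂ), 1] *
     !![Complex.cosh (ν * ℓ), Complex.sinh (ν * ℓ) / ν;
        ν * Complex.sinh (ν * ℓ), Complex.cosh (ν * ℓ)] *
     !![1, 0; (γ : ℂ), 1])

/-! Put `T = sinh (ν ℓ) / ν`. Then `sinh (ν ℓ) = ν T` (at `ν = 0` both sides vanish, since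
division by zero gives zero), so with `ν² = γ² − ω²` the matrix `Q` is `e^{−γℓ}` times a matrix
polynomial in `cosh (ν ℓ)` and `T`, and `Ψ(a, b) sinh (ν ℓ) = (a cos (ω s) + b sin (ω s)) T`:
the entries of `P` are polynomial identities. For the determinant, `det P_int = 1`,
`det (D⁻¹ Q D) = det Q` and `det Q = e^{−2γℓ} (cosh² − sinh²) = e^{−2γℓ}`. -/

lemma sinh_mul_eq_mul_sinh_mul_div (ν x : ℂ) : sinh (ν * x) = ν * (sinh (ν * x) / ν) :=
  (mul_div_cancel_of_imp' fun hν => by simp [hν]).symm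

lemma Psi_mul_sinh (ω ν a b : ℂ) (s ℓ : ℝ) :
    Psi ω ν s a b * sinh (ν * ℓ) = (a * cos (ω * s) + b * sin (ω * s)) * (sinh (ν * ℓ) / ν) := by
  rw [Psi, div_mul_eq_mul_div, mul_div_assoc]

lemma det_Dmat (δ : ℂ) : (Dmat δ).det = δ := by
  simp [Dmat, det_fin_two_of]

lemma Dmat_inv {δ : ℂ} (hδ : δ ≠ 0) : (Dmat δ)⁻¹ = Dmat δ⁻¹ := by
  refine inv_eq_right_inv ?_
  simp [Dmat, one_fin_two, hδ]

lemma isUnit_Dmat {δ : ℂ} (hδ : δ ≠ 0) : IsUnit (Dmat δ) :=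
  (isUnit_iff_isUnit_det _).mpr (by rw [det_Dmat]; exact hδ.isUnit)

lemma det_Pint {ω v : ℂ} (hω : ω ≠ 0) (hv : v ≠ 0) (ℓ : ℝ) : (Pint ω v ℓ).det = 1 := by
  rw [Pint, det_fin_two_of]
  field_simp
  linear_combination sin_sq_add_cos_sq (ω * ℓ / v)

lemma det_Qgauge (γ : ℝ) (ν : ℂ) (ℓ : ℝ) :
    (Qgauge γ ν ℓ).det = exp (-2 * γ * ℓ) := by
  have hsinh := sinh_mul_eq_mul_sinh_mul_div ν ℓ
  have hexp : exp (-γ * ℓ) ^ 2 = exp (-2 * γ * ℓ) := by rw [← exp_nat_mul]; ring_nf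
  rw [Qgauge, det_smul, det_mul, det_mul, det_fin_two_of, det_fin_two_of, det_fin_two_of,
    Fintype.card_fin, hexp]
  linear_combination exp (-2 * γ * ℓ) * (cosh_sq_sub_sinh_sq (ν * ℓ)
    + sinh (ν * ℓ) * hsinh)

lemma Qgauge_eq {γ : ℝ} {ω ν : ℂ} (hν2 : ν ^ 2 = (γ : ℂ) ^ 2 - ω ^ 2) (ℓ : ℝ) :
    Qgauge γ ν ℓ = exp (-γ * ℓ) •
      !![cosh (ν * ℓ) + γ * (sinh (ν * ℓ) / ν), sinh (ν * ℓ) / ν;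
        -ω ^ 2 * (sinh (ν * ℓ) / ν), cosh (ν * ℓ) - γ * (sinh (ν * ℓ) / ν)] := by
  have hsinh := sinh_mul_eq_mul_sinh_mul_div ν ℓ
  rw [Qgauge, mul_fin_two, mul_fin_two]
  generalize sinh (ν * ℓ) / ν = T at hsinh ⊢
  rw [hsinh]
  congr 1
  ext i j
  fin_cases i <;> fin_cases j <;> simp only [of_apply, cons_val', cons_val_zero, cons_val_one,
    cons_val_fin_one, Fin.isValue, Fin.zero_eta, Fin.mk_one]
  · ring
  · ring
  · linear_combination T * hν2
  · ring

lemma Pint_mul_conj_Qgauge {γ : ℝ} {ω δ ν : ℂ} (hω : ω ≠ 0) (hδ : δ ≠ 0)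
    (hν2 : ν ^ 2 = (γ : ℂ) ^ 2 - ω ^ 2) (s ℓ : ℝ) :
    Pint ω 1 s * (Dmat δ)⁻¹ * Qgauge γ ν ℓ * Dmat δ =
      exp (-γ * ℓ) •
        !![cos (ω * s) * cosh (ν * ℓ) - Psi ω ν s (-γ) (ω / δ) * sinh (ν * ℓ),
           (1 / ω) * cosh (ν * ℓ) * sin (ω * s)
             - (δ / ω) * Psi ω ν s (-ω) (γ / δ) * sinh (ν * ℓ);
           -ω * cosh (ν * ℓ) * sin (ω * s) - (ω / δ) * Psi ω ν s ω (δ * γ) * sinh (ν * ℓ),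
           cos (ω * s) * cosh (ν * ℓ) - δ * Psi ω ν s (γ / δ) ω * sinh (ν * ℓ)] := by
  rw [Dmat_inv hδ, Qgauge_eq hν2, mul_smul_comm, smul_mul_assoc]
  congr 1
  simp only [mul_assoc, Psi_mul_sinh]
  rw [Pint, Dmat, Dmat, mul_fin_two, mul_fin_two, mul_fin_two]
  ext i j
  fin_cases i <;> fin_cases j <;> simp only [of_apply, cons_val', cons_val_zero, cons_val_one,
    cons_val_fin_one, Fin.isValue, Fin.zero_eta, Fin.mk_one] <;>
  · field_simp
    ring

theorem stmt_11_general (γ : ℝ) (ω δ ν : ℂ) (hω : ω ≠ 0) (hδ : δ ≠ 0)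
    (hν2 : ν ^ 2 = (γ : ℂ) ^ 2 - ω ^ 2) (s ℓ : ℝ) :
    Pint ω 1 s * (Dmat δ)⁻¹ * Qgauge γ ν ℓ * Dmat δ =
      Complex.exp (-(γ : ℂ) * (ℓ : ℂ)) •
        !![Complex.cos (ω * s) * Complex.cosh (ν * ℓ)
             - Psi ω ν s (-(γ : ℂ)) (ω / δ) * Complex.sinh (ν * ℓ),
           (1 / ω) * Complex.cosh (ν * ℓ) * Complex.sin (ω * s)
             - (δ / ω) * Psi ω ν s (-ω) ((γ : ℂ) / δ) * Complex.sinh (ν * ℓ);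
           -ω * Complex.cosh (ν * ℓ) * Complex.sin (ω * s)
             - (ω / δ) * Psi ω ν s ω (δ * (γ : ℂ)) * Complex.sinh (ν * ℓ),
           Complex.cos (ω * s) * Complex.cosh (ν * ℓ)
             - δ * Psi ω ν s ((γ : ℂ) / δ) ω * Complex.sinh (ν * ℓ)] ∧
    (Pint ω 1 s * (Dmat δ)⁻¹ * Qgauge γ ν ℓ * Dmat δ).det =
      Complex.exp (-2 * (γ : ℂ) * (ℓ : ℂ)) ∧
    (Complex.exp ((γ : ℂ) * (ℓ : ℂ)) •
      (Pint ω 1 s * (Dmat δ)⁻¹ * Qgauge γ ν ℓ * Dmat δ)).det = 1 := by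
  have hdet : (Pint ω 1 s * (Dmat δ)⁻¹ * Qgauge γ ν ℓ * Dmat δ).det = exp (-2 * γ * ℓ) := by
    rw [mul_assoc, mul_assoc, ← mul_assoc (Dmat δ)⁻¹, det_mul, det_conj' (isUnit_Dmat hδ),
      det_Pint hω one_ne_zero, det_Qgauge, one_mul]
  refine ⟨Pint_mul_conj_Qgauge hω hδ hν2 s ℓ, hdet, ?_⟩
  rw [det_smul, hdet, Fintype.card_fin, ← exp_nat_mul, ← exp_add]
  ring_nf
  exact exp_zero

/-- Explicit form of the one-block gauge propagation matrix
`P = P_int(ω,1,s)·D(δ)⁻¹·Q·D(δ)`, together with `det P = e^{−2γℓ}` and the fact that the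
symmetrised propagation matrix `e^{γℓ}P` has determinant one. -/
theorem stmt_11 (γ : ℝ) (ω δ ν : ℂ) (hω : ω ≠ 0) (hδ : δ ≠ 0) (hν : ν ≠ 0)
    (hν2 : ν ^ 2 = (γ : ℂ) ^ 2 - ω ^ 2) (s ℓ : ℝ) :
    Pint ω 1 s * (Dmat δ)⁻¹ * Qgauge γ ν ℓ * Dmat δ =
      Complex.exp (-(γ : ℂ) * (ℓ : ℂ)) •
        !![Complex.cos (ω * s) * Complex.cosh (ν * ℓ)
             - Psi ω ν s (-(γ : ℂ)) (ω / δ) * Complex.sinh (ν * ℓ),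
           (1 / ω) * Complex.cosh (ν * ℓ) * Complex.sin (ω * s)
             - (δ / ω) * Psi ω ν s (-ω) ((γ : ℂ) / δ) * Complex.sinh (ν * ℓ);
           -ω * Complex.cosh (ν * ℓ) * Complex.sin (ω * s)
             - (ω / δ) * Psi ω ν s ω (δ * (γ : ℂ)) * Complex.sinh (ν * ℓ),
           Complex.cos (ω * s) * Complex.cosh (ν * ℓ)
             - δ * Psi ω ν s ((γ : ℂ) / δ) ω * Complex.sinh (ν * ℓ)] ∧
    (Pint ω 1 s * (Dmat δ)⁻¹ * Qgauge γ ν ℓ * Dmat δ).det =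
      Complex.exp (-2 * (γ : ℂ) * (ℓ : ℂ)) ∧
    (Complex.exp ((γ : ℂ) * (ℓ : ℂ)) •
      (Pint ω 1 s * (Dmat δ)⁻¹ * Qgauge γ ν ℓ * Dmat δ)).det = 1 :=
  stmt_11_general γ ω δ ν hω hδ hν2 s ℓ
end

section
/- Let U ⊆ ℂ be an open set, let ω* ∈ U with ω* real, and let k : U → ℂ be complex-analytic on U such that k(ω) is real for every real ω ∈ U and k'(ω*) ≠ 0. Then there exist constants B₁, B₂ > 0 and an open neighbourhood V ⊆ U of ω* such that for all ω ∈ V: B₁·|Im ω| ≤ |Im k(ω)| ≤ B₂·|Im ω|. -/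
/-!
Since `k` is real on the real axis, `c = k'(ω*)` is real and so is `k (Re ω)`. On a small ball
around `ω*` where `‖k' - c‖ ≤ |c| / 2`, the mean value inequality for `z ↦ k z - c z` between
`Re ω` and `ω = Re ω + i Im ω` gives `|Im k(ω) - c Im ω| ≤ |c| / 2 · |Im ω|`, whence
`|c| / 2 · |Im ω| ≤ |Im k(ω)| ≤ 3 |c| / 2 · |Im ω|`.
-/

open Complex Metric Filter Topology

theorem HasDerivAt.im_eq_zero_of_eventually_im_ofReal {f : ℂ → ℂ} {c : ℂ} {x : ℝ}
    (hf : HasDerivAt f c x) (hreal : ∀ᶠ t : ℝ in 𝓝 x, (f t).im = 0) : c.im = 0 := by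
  have him : HasDerivAt (fun t : ℝ => (f t).im) c.im x := by
    -- `Re (-I * w) = Im w`
    simpa using (hf.const_mul (-I)).real_of_complex
  exact him.unique ((hasDerivAt_const x 0).congr_of_eventuallyEq hreal)

theorem Complex.ofReal_re_mem_ball {ω : ℂ} {x₀ r : ℝ} (hω : ω ∈ ball (x₀ : ℂ) r) :
    (ω.re : ℂ) ∈ ball (x₀ : ℂ) r := by
  rw [mem_ball, dist_of_im_eq (by simp), Real.dist_eq]
  simpa using (abs_re_le_norm (ω - x₀)).trans_lt (mem_ball_iff_norm.1 hω)

theorem Complex.norm_sub_ofReal_re (ω : ℂ) : ‖ω - ω.re‖ = |ω.im| := by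
  have : ω - ω.re = ω.im * I := by apply Complex.ext <;> simp
  simp [this]

theorem abs_bounds_of_abs_sub_mul_le {y a t ε : ℝ} (h : |y - a * t| ≤ ε * |t|) :
    (|a| - ε) * |t| ≤ |y| ∧ |y| ≤ (|a| + ε) * |t| := by
  have h₁ := abs_sub_abs_le_abs_sub (a * t) y
  have h₂ := abs_sub_abs_le_abs_sub y (a * t)
  rw [abs_sub_comm] at h₁
  rw [abs_mul] at h₁ h₂
  constructor <;> linarith

theorem abs_im_sub_mul_im_le_of_norm_deriv_sub_le {k : ℂ → ℂ} {x₀ r a ε : ℝ}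
    (hk : DifferentiableOn ℂ k (ball (x₀ : ℂ) r))
    (hreal : ∀ t : ℝ, (t : ℂ) ∈ ball (x₀ : ℂ) r → (k t).im = 0)
    (hderiv : ∀ z ∈ ball (x₀ : ℂ) r, ‖deriv k z - a‖ ≤ ε) {ω : ℂ}
    (hω : ω ∈ ball (x₀ : ℂ) r) :
    |(k ω).im - a * ω.im| ≤ ε * |ω.im| := by
  set x : ℂ := (ω.re : ℂ)
  have hx : x ∈ ball (x₀ : ℂ) r := ofReal_re_mem_ball hω
  have hmvt : ‖(k ω - a * ω) - (k x - a * x)‖ ≤ ε * ‖ω - x‖ := by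
    refine (convex_ball _ r).norm_image_sub_le_of_norm_hasDerivWithin_le
      (f := fun z => k z - a * z) (fun z hz => ?_) hderiv hx hω
    have hkz := (hk.differentiableAt (isOpen_ball.mem_nhds hz)).hasDerivAt
    exact ((hkz.sub ((hasDerivAt_id z).const_mul (a : ℂ))).congr_deriv (by simp)).hasDerivWithinAt
  have him : ((k ω - a * ω) - (k x - a * x)).im = (k ω).im - a * ω.im := by
    simp [x, hreal ω.re hx]
  calc |(k ω).im - a * ω.im| ≤ ‖(k ω - a * ω) - (k x - a * x)‖ := him ▸ abs_im_le_norm _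
    _ ≤ ε * |ω.im| := by rwa [← norm_sub_ofReal_re]

/-- Near an interior band point `ω*` (real, with `k` analytic, real on the reals, and
`k'(ω*) ≠ 0`), the imaginary parts of `ω` and `k(ω)` are comparable:
`B₁|Im ω| ≤ |Im k(ω)| ≤ B₂|Im ω|` on a neighbourhood of `ω*`. -/
theorem stmt_15 (U : Set ℂ) (hU : IsOpen U) (ωstar : ℂ) (hmem : ωstar ∈ U)
    (hreal : ωstar.im = 0) (k : ℂ → ℂ) (hk : DifferentiableOn ℂ k U)
    (hkreal : ∀ ω ∈ U, ω.im = 0 → (k ω).im = 0)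
    (hk' : deriv k ωstar ≠ 0) :
    ∃ B₁ B₂ : ℝ, 0 < B₁ ∧ 0 < B₂ ∧
      ∃ V : Set ℂ, IsOpen V ∧ ωstar ∈ V ∧ V ⊆ U ∧
        ∀ ω ∈ V, B₁ * |ω.im| ≤ |(k ω).im| ∧ |(k ω).im| ≤ B₂ * |ω.im| := by
  obtain ⟨x₀, rfl⟩ : ∃ x₀ : ℝ, ωstar = x₀ := ⟨ωstar.re, Complex.ext rfl (by simp [hreal])⟩
  have hkx₀ : HasDerivAt k (deriv k x₀) x₀ :=
    (hk.differentiableAt (hU.mem_nhds hmem)).hasDerivAt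
  obtain ⟨a, ha⟩ : ∃ a : ℝ, deriv k x₀ = a := by
    refine ⟨(deriv k x₀).re, Complex.ext rfl ?_⟩
    refine (hkx₀.im_eq_zero_of_eventually_im_ofReal ?_).trans (ofReal_im _).symm
    filter_upwards [continuous_ofReal.continuousAt (hU.mem_nhds hmem)] with t ht
    exact hkreal t ht (ofReal_im t)
  have ha₀ : 0 < |a| := by simpa [ha] using hk'
  have hcont : ContinuousAt (deriv k) x₀ := ((hk.analyticOnNhd hU).deriv _ hmem).continuousAt
  have hnear : ∀ᶠ z in 𝓝 (x₀ : ℂ), z ∈ U ∧ ‖deriv k z - a‖ ≤ |a| / 2 := by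
    refine (hU.eventually_mem hmem).and ?_
    have hlim : Tendsto (deriv k) (𝓝 (x₀ : ℂ)) (𝓝 (a : ℂ)) := ha ▸ hcont
    filter_upwards [hlim (closedBall_mem_nhds _ (half_pos ha₀))] with z hz
    simpa [dist_eq_norm] using hz
  obtain ⟨r, hr, hball⟩ := Metric.eventually_nhds_iff_ball.1 hnear
  refine ⟨|a| - |a| / 2, |a| + |a| / 2, by linarith, by linarith, ball (x₀ : ℂ) r, isOpen_ball,
    mem_ball_self hr, fun z hz => (hball z hz).1, fun ω hω => abs_bounds_of_abs_sub_mul_le ?_⟩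
  exact abs_im_sub_mul_im_le_of_norm_deriv_sub_le (hk.mono fun z hz => (hball z hz).1)
    (fun t ht => hkreal t (hball t ht).1 (ofReal_im t)) (fun z hz => (hball z hz).2) hω
end

section
/- Let B be an invertible 2×2 complex matrix, let k ∈ ℂ, let r be a nonnegative integer, let C₁ ≥ 0, and let M be a positive integer with |Im k| ≤ (C₁ + r·log M)/M. Let P = B·diag(e^{ik}, e^{−ik})·B⁻¹ and set C₃ = e^{C₁}·‖B‖·‖B⁻¹‖, where ‖·‖ denotes the operator norm on 2×2 complex matrices induced by the Euclidean norm on ℂ². Then for every natural number n with n ≤ M and every x ∈ ℂ²: (C₃·M^r)⁻¹·‖x‖ ≤ ‖Pⁿ·x‖ ≤ C₃·M^r·‖x‖. -/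
open Complex Matrix

/-- The operator norm of a 2×2 complex matrix, induced by the Euclidean norm on `ℂ²`. -/
noncomputable def opNorm2 (B : Matrix (Fin 2) (Fin 2) ℂ) : ℝ :=
  ‖LinearMap.toContinuousLinearMap (Matrix.toEuclideanLin B)‖

/-!
Since `P = B D B⁻¹` with `D` diagonal, `Pⁿ = B Dⁿ B⁻¹`, and the diagonal entries of `Dⁿ` have
moduli `e^{∓n Im k}`. As `n |Im k| ≤ M |Im k| ≤ C₁ + r log M`, these moduli lie in `[c⁻¹, c]` for
`c = e^{C₁} Mʳ`, so `Dⁿ` stretches every vector by a factor in `[c⁻¹, c]`; conjugating by `B`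
costs at most a further factor `‖B‖ ‖B⁻¹‖` in either direction.
-/

section Conjugation

variable {E : Type*} [SeminormedAddCommGroup E] {f g D : E → E} {β γ : ℝ}

theorem norm_conj_le (hβ : 0 ≤ β) (hf : ∀ y, ‖f y‖ ≤ β * ‖y‖) (hg : ∀ y, ‖g y‖ ≤ γ * ‖y‖)
    {b : ℝ} (hb : 0 ≤ b) (hD : ∀ y, ‖D y‖ ≤ b * ‖y‖) (x : E) :
    ‖f (D (g x))‖ ≤ β * b * γ * ‖x‖ :=
  calc ‖f (D (g x))‖ ≤ β * ‖D (g x)‖ := hf _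
    _ ≤ β * (b * ‖g x‖) := by gcongr; exact hD _
    _ ≤ β * (b * (γ * ‖x‖)) := by gcongr; exact hg _
    _ = β * b * γ * ‖x‖ := by ring

theorem le_norm_conj (hβ : 0 ≤ β) (hγ : 0 ≤ γ) (hf : ∀ y, ‖f y‖ ≤ β * ‖y‖)
    (hg : ∀ y, ‖g y‖ ≤ γ * ‖y‖) (hfg : ∀ y, f (g y) = y) (hgf : ∀ y, g (f y) = y)
    {a : ℝ} (ha : 0 ≤ a) (hD : ∀ y, a * ‖y‖ ≤ ‖D y‖) (x : E) :
    (β * γ)⁻¹ * a * ‖x‖ ≤ ‖f (D (g x))‖ := by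
  rw [mul_assoc]
  refine inv_mul_le_of_le_mul₀ (mul_nonneg hβ hγ) (norm_nonneg _) ?_
  calc a * ‖x‖ = a * ‖f (g x)‖ := by rw [hfg]
    _ ≤ a * (β * ‖g x‖) := by gcongr; exact hf _
    _ = β * (a * ‖g x‖) := by ring
    _ ≤ β * ‖D (g x)‖ := by gcongr; exact hD _
    _ = β * ‖g (f (D (g x)))‖ := by rw [hgf]
    _ ≤ β * (γ * ‖f (D (g x))‖) := by gcongr; exact hg _
    _ = β * γ * ‖f (D (g x))‖ := by ring

end Conjugation

theorem EuclideanSpace.norm_le_of_forall_norm_le {𝕜 ι : Type*} [RCLike 𝕜] [Fintype ι]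
    {x y : EuclideanSpace 𝕜 ι} (h : ∀ i, ‖x i‖ ≤ ‖y i‖) : ‖x‖ ≤ ‖y‖ := by
  rw [EuclideanSpace.norm_eq, EuclideanSpace.norm_eq]
  gcongr with i
  exact h i

namespace Matrix

variable {𝕜 ι : Type*} [RCLike 𝕜] [Fintype ι] [DecidableEq ι]

theorem toEuclideanLin_diagonal_apply (v : ι → 𝕜) (x : EuclideanSpace 𝕜 ι) (i : ι) :
    toEuclideanLin (diagonal v) x i = v i * x i := by
  simp [toLpLin_apply, mulVec_diagonal]

theorem norm_toEuclideanLin_diagonal_le {v : ι → 𝕜} {b : ℝ} (hb : 0 ≤ b)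
    (hv : ∀ i, ‖v i‖ ≤ b) (x : EuclideanSpace 𝕜 ι) :
    ‖toEuclideanLin (diagonal v) x‖ ≤ b * ‖x‖ :=
  calc ‖toEuclideanLin (diagonal v) x‖ ≤ ‖(b : 𝕜) • x‖ :=
        EuclideanSpace.norm_le_of_forall_norm_le fun i => by
          rw [toEuclideanLin_diagonal_apply, PiLp.smul_apply, norm_smul, norm_mul,
            RCLike.norm_ofReal, abs_of_nonneg hb]
          exact mul_le_mul_of_nonneg_right (hv i) (norm_nonneg _)
    _ = b * ‖x‖ := by rw [norm_smul, RCLike.norm_ofReal, abs_of_nonneg hb]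

theorem le_norm_toEuclideanLin_diagonal {v : ι → 𝕜} {a : ℝ} (ha : 0 ≤ a)
    (hv : ∀ i, a ≤ ‖v i‖) (x : EuclideanSpace 𝕜 ι) :
    a * ‖x‖ ≤ ‖toEuclideanLin (diagonal v) x‖ :=
  calc a * ‖x‖ = ‖(a : 𝕜) • x‖ := by rw [norm_smul, RCLike.norm_ofReal, abs_of_nonneg ha]
    _ ≤ ‖toEuclideanLin (diagonal v) x‖ :=
        EuclideanSpace.norm_le_of_forall_norm_le fun i => by
          rw [toEuclideanLin_diagonal_apply, PiLp.smul_apply, norm_smul, norm_mul,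
            RCLike.norm_ofReal, abs_of_nonneg ha]
          exact mul_le_mul_of_nonneg_right (hv i) (norm_nonneg _)

theorem toEuclideanLin_mul_apply (A C : Matrix ι ι 𝕜) (x : EuclideanSpace 𝕜 ι) :
    toEuclideanLin (A * C) x = toEuclideanLin A (toEuclideanLin C x) := by
  simp only [toLpLin_mul_same, LinearMap.comp_apply]

theorem toEuclideanLin_apply_toEuclideanLin_of_mul_eq_one {A C : Matrix ι ι 𝕜} (h : A * C = 1)
    (x : EuclideanSpace 𝕜 ι) : toEuclideanLin A (toEuclideanLin C x) = x := by
  rw [← toEuclideanLin_mul_apply, h, toLpLin_one, LinearMap.id_apply]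

end Matrix

section OpNorm2

variable {B D : Matrix (Fin 2) (Fin 2) ℂ}

theorem norm_toEuclideanLin_le_opNorm2 (A : Matrix (Fin 2) (Fin 2) ℂ)
    (x : EuclideanSpace ℂ (Fin 2)) : ‖toEuclideanLin A x‖ ≤ opNorm2 A * ‖x‖ :=
  (LinearMap.toContinuousLinearMap (toEuclideanLin A)).le_opNorm x

theorem norm_toEuclideanLin_conj_le {b : ℝ} (hb : 0 ≤ b)
    (hD : ∀ y, ‖toEuclideanLin D y‖ ≤ b * ‖y‖) (x : EuclideanSpace ℂ (Fin 2)) :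
    ‖toEuclideanLin (B * D * B⁻¹) x‖ ≤ opNorm2 B * b * opNorm2 B⁻¹ * ‖x‖ := by
  rw [toEuclideanLin_mul_apply, toEuclideanLin_mul_apply]
  exact norm_conj_le (norm_nonneg _) (norm_toEuclideanLin_le_opNorm2 B)
    (norm_toEuclideanLin_le_opNorm2 B⁻¹) hb hD x

theorem le_norm_toEuclideanLin_conj (hB : IsUnit B.det) {a : ℝ} (ha : 0 ≤ a)
    (hD : ∀ y, a * ‖y‖ ≤ ‖toEuclideanLin D y‖) (x : EuclideanSpace ℂ (Fin 2)) :
    (opNorm2 B * opNorm2 B⁻¹)⁻¹ * a * ‖x‖ ≤ ‖toEuclideanLin (B * D * B⁻¹) x‖ := by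
  rw [toEuclideanLin_mul_apply, toEuclideanLin_mul_apply]
  exact le_norm_conj (norm_nonneg _) (norm_nonneg _) (norm_toEuclideanLin_le_opNorm2 B)
    (norm_toEuclideanLin_le_opNorm2 B⁻¹)
    (toEuclideanLin_apply_toEuclideanLin_of_mul_eq_one (mul_nonsing_inv B hB))
    (toEuclideanLin_apply_toEuclideanLin_of_mul_eq_one (nonsing_inv_mul B hB)) ha hD x

end OpNorm2

theorem Complex.norm_exp_I_mul (k : ℂ) : ‖exp (I * k)‖ = Real.exp (-k.im) := by
  simp [Complex.norm_exp]

theorem Complex.norm_exp_neg_I_mul (k : ℂ) : ‖exp (-(I * k))‖ = Real.exp k.im := by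
  simp [Complex.norm_exp]

theorem Real.exp_mem_Icc_of_abs_le {s t c : ℝ} (hs : |s| ≤ t) (hc : Real.exp t ≤ c) :
    Real.exp s ∈ Set.Icc c⁻¹ c := by
  have hst := abs_le.mp hs
  constructor
  · calc c⁻¹ ≤ (Real.exp t)⁻¹ := inv_anti₀ (Real.exp_pos t) hc
      _ = Real.exp (-t) := (Real.exp_neg t).symm
      _ ≤ Real.exp s := Real.exp_le_exp.mpr hst.1
  · exact (Real.exp_le_exp.mpr hst.2).trans hc

theorem Real.exp_mul_le_exp_mul_pow {t C₁ : ℝ} {r n M : ℕ} (hM : 0 < M) (hn : n ≤ M)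
    (ht : 0 ≤ t) (h : t ≤ (C₁ + r * Real.log M) / M) :
    Real.exp (n * t) ≤ Real.exp C₁ * M ^ r := by
  have hM' : (0 : ℝ) < M := by exact_mod_cast hM
  rw [← Real.exp_log (pow_pos hM' r), ← Real.exp_add, Real.log_pow, Real.exp_le_exp]
  calc (n : ℝ) * t ≤ M * t := by gcongr
    _ ≤ M * ((C₁ + r * Real.log M) / M) := by gcongr
    _ = C₁ + r * Real.log M := by field_simp

theorem stmt_17_general (B : Matrix (Fin 2) (Fin 2) ℂ) (hB : IsUnit B.det)
    (k : ℂ) (r : ℕ) (C₁ : ℝ) (M : ℕ) (hM : 0 < M)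
    (hk : |k.im| ≤ (C₁ + r * Real.log M) / M) :
    ∀ n : ℕ, n ≤ M → ∀ x : EuclideanSpace ℂ (Fin 2),
      (Real.exp C₁ * opNorm2 B * opNorm2 B⁻¹ * (M : ℝ) ^ r)⁻¹ * ‖x‖ ≤
        ‖Matrix.toEuclideanLin
          ((B * Matrix.diagonal ![Complex.exp (Complex.I * k),
              Complex.exp (-(Complex.I * k))] * B⁻¹) ^ n) x‖ ∧
      ‖Matrix.toEuclideanLin
          ((B * Matrix.diagonal ![Complex.exp (Complex.I * k),
              Complex.exp (-(Complex.I * k))] * B⁻¹) ^ n) x‖ ≤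
        Real.exp C₁ * opNorm2 B * opNorm2 B⁻¹ * (M : ℝ) ^ r * ‖x‖ := by
  intro n hn x
  set v : Fin 2 → ℂ := ![exp (I * k), exp (-(I * k))]
  set c := Real.exp C₁ * (M : ℝ) ^ r
  have hc : Real.exp (n * |k.im|) ≤ c := Real.exp_mul_le_exp_mul_pow hM hn (abs_nonneg _) hk
  have hc0 : 0 < c := by positivity
  have hv : ∀ i, ‖(v ^ n) i‖ ∈ Set.Icc c⁻¹ c := by
    simp only [Fin.forall_fin_two, Pi.pow_apply, norm_pow, v, cons_val_zero, cons_val_one,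
      Complex.norm_exp_I_mul, Complex.norm_exp_neg_I_mul, ← Real.exp_nat_mul]
    constructor <;> refine Real.exp_mem_Icc_of_abs_le ?_ hc <;> simp [abs_mul]
  have hpow : (B * diagonal v * B⁻¹) ^ n = B * diagonal (v ^ n) * B⁻¹ := by
    rw [← diagonal_pow]
    exact Units.conj_pow (nonsingInvUnit B hB) _ n
  rw [hpow]
  constructor
  · convert le_norm_toEuclideanLin_conj hB (inv_nonneg.mpr hc0.le)
      (le_norm_toEuclideanLin_diagonal (inv_nonneg.mpr hc0.le) fun i => (hv i).1) x using 2
    rw [← mul_inv]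
    ring
  · convert norm_toEuclideanLin_conj_le hc0.le
      (norm_toEuclideanLin_diagonal_le hc0.le fun i => (hv i).2) x using 1
    ring

/-- Polynomial two-sided bounds for the powers of the symmetrised cell propagation matrix
`P = B diag(e^{ik}, e^{−ik}) B⁻¹` when `|Im k| ≤ (C₁ + r log M)/M`:
for all `n ≤ M` and `x ∈ ℂ²`, `(C₃Mʳ)⁻¹‖x‖ ≤ ‖Pⁿx‖ ≤ C₃Mʳ‖x‖` with
`C₃ = e^{C₁}‖B‖‖B⁻¹‖`. -/
theorem stmt_17 (B : Matrix (Fin 2) (Fin 2) ℂ) (hB : IsUnit B.det)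
    (k : ℂ) (r : ℕ) (C₁ : ℝ) (hC₁ : 0 ≤ C₁) (M : ℕ) (hM : 0 < M)
    (hk : |k.im| ≤ (C₁ + r * Real.log M) / M) :
    ∀ n : ℕ, n ≤ M → ∀ x : EuclideanSpace ℂ (Fin 2),
      (Real.exp C₁ * opNorm2 B * opNorm2 B⁻¹ * (M : ℝ) ^ r)⁻¹ * ‖x‖ ≤
        ‖Matrix.toEuclideanLin
          ((B * Matrix.diagonal ![Complex.exp (Complex.I * k),
              Complex.exp (-(Complex.I * k))] * B⁻¹) ^ n) x‖ ∧
      ‖Matrix.toEuclideanLin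
          ((B * Matrix.diagonal ![Complex.exp (Complex.I * k),
              Complex.exp (-(Complex.I * k))] * B⁻¹) ^ n) x‖ ≤
        Real.exp C₁ * opNorm2 B * opNorm2 B⁻¹ * (M : ℝ) ^ r * ‖x‖ :=
  stmt_17_general B hB k r C₁ M hM hk
end
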